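/- arXiv:2602.23967 — 2 statements merged into one kernel-verified Lean document; each statement's English description precedes it below -/
import Mathlib

section
/- (Weak duality for the restricted Wolfe dual.) Let Q be an n×n real symmetric positive semidefinite matrix, c ∈ ℝⁿ, A an m×n real matrix, and let l_v, u_v ∈ ℝⁿ with l_v ≤ u_v and l_c, u_c ∈ ℝᵐ with l_c ≤ u_c. Suppose x̂ ∈ ℝⁿ is primal feasible, i.e., l_v ≤ x̂ ≤ u_v and l_c ≤ A x̂ ≤ u_c. Then for every x ∈ ℝⁿ and y ∈ ℝᵐ, setting r = Qx + Aᵀy + c, one has −p(−r; l_v, u_v) − (1/2)xᵀQx − p(y; l_c, u_c) ≤ (1/2)x̂ᵀQx̂ + cᵀx̂. -/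
open Matrix

/-- `p(z; l, u) = ⟨u, z⁺⟩ − ⟨l, z⁻⟩`, where `z⁺ = max(z, 0)` and `z⁻ = max(−z, 0)`
componentwise. -/
noncomputable def pSupport {m : ℕ} (z l u : Fin m → ℝ) : ℝ :=
  (u ⬝ᵥ fun i => max (z i) 0) - (l ⬝ᵥ fun i => max (-z i) 0)

lemma dot_le_pSupport {m : ℕ} (z l u w : Fin m → ℝ) (h1 : l ≤ w) (h2 : w ≤ u) :
    w ⬝ᵥ z ≤ pSupport z l u := by
  unfold pSupport dotProduct
  rw [← Finset.sum_sub_distrib]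
  apply Finset.sum_le_sum
  intro i _
  dsimp only
  rcases le_or_gt 0 (z i) with h | h
  · have : max (z i) 0 = z i := max_eq_left h
    have h2' : max (-z i) 0 = 0 := max_eq_right (by linarith)
    rw [this, h2']
    have := h2 i
    nlinarith
  · have : max (z i) 0 = 0 := max_eq_right h.le
    have h2' : max (-z i) 0 = -z i := max_eq_left (by linarith)
    rw [this, h2']
    have := h1 i
    nlinarith

/-- Weak duality for the restricted Wolfe dual: if `x̂` is primal feasible
(`l_v ≤ x̂ ≤ u_v`, `l_c ≤ Ax̂ ≤ u_c`), then for every `(x, y)` with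
`r = Qx + Aᵀy + c` the dual objective is at most the primal objective:
`−p(−r; l_v, u_v) − (1/2)xᵀQx − p(y; l_c, u_c) ≤ (1/2)x̂ᵀQx̂ + cᵀx̂`. -/
theorem restricted_wolfe_weak_duality {n m : ℕ}
    (Q : Matrix (Fin n) (Fin n) ℝ) (hQ : Q.PosSemidef)
    (c : Fin n → ℝ) (A : Matrix (Fin m) (Fin n) ℝ)
    (lv uv : Fin n → ℝ) (hv : lv ≤ uv)
    (lc uc : Fin m → ℝ) (hc : lc ≤ uc)
    (xhat : Fin n → ℝ)
    (hx1 : lv ≤ xhat) (hx2 : xhat ≤ uv)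
    (hx3 : lc ≤ A.mulVec xhat) (hx4 : A.mulVec xhat ≤ uc)
    (x : Fin n → ℝ) (y : Fin m → ℝ) (r : Fin n → ℝ)
    (hr : r = Q.mulVec x + Aᵀ.mulVec y + c) :
    -pSupport (-r) lv uv - (1 / 2) * (x ⬝ᵥ Q.mulVec x) - pSupport y lc uc
      ≤ (1 / 2) * (xhat ⬝ᵥ Q.mulVec xhat) + c ⬝ᵥ xhat := by
  have hp1 : xhat ⬝ᵥ (-r) ≤ pSupport (-r) lv uv := dot_le_pSupport _ _ _ _ hx1 hx2
  have hp2 : A.mulVec xhat ⬝ᵥ y ≤ pSupport y lc uc := dot_le_pSupport _ _ _ _ hx3 hx4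
  have hs : ∀ i j, Q i j = Q j i := fun i j => by
    have := congrFun (congrFun hQ.1 i) j
    simpa [Matrix.conjTranspose_apply] using this.symm
  have hsym : xhat ⬝ᵥ Q.mulVec x = x ⬝ᵥ Q.mulVec xhat := by
    simp only [dotProduct, mulVec, dotProduct, Finset.mul_sum]
    rw [Finset.sum_comm]
    refine Finset.sum_congr rfl fun i _ => Finset.sum_congr rfl fun j _ => ?_
    rw [hs i j]; ring
  have hAy : xhat ⬝ᵥ Aᵀ.mulVec y = A.mulVec xhat ⬝ᵥ y := by
    rw [dotProduct_mulVec, vecMul_transpose]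
  have hpsd : 0 ≤ (xhat - x) ⬝ᵥ Q.mulVec (xhat - x) := by simpa using hQ.dotProduct_mulVec_nonneg (xhat - x)
  have hexp : (xhat - x) ⬝ᵥ Q.mulVec (xhat - x)
      = xhat ⬝ᵥ Q.mulVec xhat - 2 * (xhat ⬝ᵥ Q.mulVec x) + x ⬝ᵥ Q.mulVec x := by
    simp only [mulVec_sub, dotProduct_sub, sub_dotProduct, hsym]
    ring
  have hdr : xhat ⬝ᵥ r = xhat ⬝ᵥ Q.mulVec x + A.mulVec xhat ⬝ᵥ y + c ⬝ᵥ xhat := by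
    rw [hr, dotProduct_add, dotProduct_add, hAy, dotProduct_comm xhat c]
  have hneg : xhat ⬝ᵥ (-r) = -(xhat ⬝ᵥ r) := by rw [dotProduct_neg]
  linarith [hp1, hp2, hpsd, hexp.ge, hexp.le, hdr.ge, hdr.le, hneg.le, hneg.ge]
end

section
/- (Primal infeasibility certificate, necessity.) Let A be an m×n real matrix and let l_v, u_v ∈ ℝⁿ with l_v ≤ u_v and l_c, u_c ∈ ℝᵐ with l_c ≤ u_c. If there is no x ∈ ℝⁿ satisfying both l_v ≤ x ≤ u_v and l_c ≤ Ax ≤ u_c, then there exists y ∈ ℝᵐ such that p(−Aᵀy; l_v, u_v) + p(y; l_c, u_c) < 0. -/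
open Matrix

lemma pSupport_attained {k : ℕ} (z l u : Fin k → ℝ) (h : l ≤ u) :
    ∃ x : Fin k → ℝ, l ≤ x ∧ x ≤ u ∧ pSupport z l u = z ⬝ᵥ x := by
  refine ⟨fun i => if 0 ≤ z i then u i else l i, ?_, ?_, ?_⟩
  · intro i; dsimp only; split
    · exact h i
    · exact le_refl _
  · intro i; dsimp only; split
    · exact le_refl _
    · exact h i
  · unfold pSupport
    simp only [dotProduct]
    rw [← Finset.sum_sub_distrib]
    apply Finset.sum_congr rfl
    intro i _
    by_cases hz : 0 ≤ z i
    · rw [if_pos hz, max_eq_left hz, max_eq_right (by linarith)]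
      ring
    · push_neg at hz
      rw [if_neg (not_le.mpr hz), max_eq_right hz.le, max_eq_left (by linarith)]
      ring

/-- Primal infeasibility certificate (necessity): if no `x` satisfies
`l_v ≤ x ≤ u_v` and `l_c ≤ Ax ≤ u_c`, then there exists `y` with
`p(−Aᵀy; l_v, u_v) + p(y; l_c, u_c) < 0`. -/
theorem infeasibility_certificate_necessary {n m : ℕ}
    (A : Matrix (Fin m) (Fin n) ℝ)
    (lv uv : Fin n → ℝ) (hv : lv ≤ uv)
    (lc uc : Fin m → ℝ) (hc : lc ≤ uc)
    (hinf : ¬ ∃ x : Fin n → ℝ, lv ≤ x ∧ x ≤ uv ∧ lc ≤ A.mulVec x ∧ A.mulVec x ≤ uc) :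
    ∃ y : Fin m → ℝ, pSupport (-(Aᵀ.mulVec y)) lv uv + pSupport y lc uc < 0 := by
  classical
  set S : Set (Fin m → ℝ) := A.mulVec '' (Set.Icc lv uv) with hSdef
  have hcont : Continuous (A.mulVec : (Fin n → ℝ) → (Fin m → ℝ)) :=
    LinearMap.continuous_of_finiteDimensional A.mulVecLin
  have hScomp : IsCompact S := isCompact_Icc.image hcont
  have hSconv : Convex ℝ S := (convex_Icc lv uv).linear_image A.mulVecLin
  have hdisj : Disjoint (Set.Icc lc uc) S := by
    rw [Set.disjoint_left]
    rintro a haT ⟨x, hx, rfl⟩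
    exact hinf ⟨x, hx.1, hx.2, haT.1, haT.2⟩
  obtain ⟨f, u, v, hfT, huv, hfS⟩ :=
    geometric_hahn_banach_compact_closed (convex_Icc lc uc) isCompact_Icc hSconv
      hScomp.isClosed hdisj
  set y : Fin m → ℝ := fun i => f (Pi.single i 1) with hy
  have hrep : ∀ w : Fin m → ℝ, f w = y ⬝ᵥ w := by
    intro w
    have hw : w = ∑ i, (w i) • (Pi.single i 1 : Fin m → ℝ) := by
      conv_lhs => rw [← Finset.univ_sum_single w]
      apply Finset.sum_congr rfl
      intro i _
      ext j
      simp [Pi.single_apply, mul_comm]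
    conv_lhs => rw [hw]
    rw [map_sum]
    simp only [_root_.map_smul, smul_eq_mul, dotProduct]
    apply Finset.sum_congr rfl
    intro i _
    rw [mul_comm]
  refine ⟨y, ?_⟩
  obtain ⟨xw, hxw1, hxw2, hxw3⟩ := pSupport_attained y lc uc hc
  obtain ⟨xs, hxs1, hxs2, hxs3⟩ := pSupport_attained (-(Aᵀ.mulVec y)) lv uv hv
  have h1 : pSupport y lc uc < u := by
    rw [hxw3, ← hrep]
    exact hfT xw ⟨hxw1, hxw2⟩
  have h2 : v < f (A.mulVec xs) := hfS _ ⟨xs, ⟨hxs1, hxs2⟩, rfl⟩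
  have h3 : pSupport (-(Aᵀ.mulVec y)) lv uv = -(f (A.mulVec xs)) := by
    rw [hxs3, hrep, neg_dotProduct, mulVec_transpose, ← dotProduct_mulVec]
  linarith
end
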